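/- Let Ω ⊆ ℝⁿ be an open convex set, T ⊆ ℝ a compact set, and h : ℝⁿ × T → ℝ continuous on Ω × T such that p ↦ h(p, τ) is convex on Ω for every τ ∈ T. Define f(p) = max_{τ ∈ T} h(p, τ). Then f is convex on Ω, and for every p ∈ Ω and v ∈ ℝⁿ the one-sided directional derivative f′(p; v) := lim_{t→0⁺} (f(p + t·v) − f(p))/t exists and satisfies f′(p; v) = max_{τ ∈ T(p)} h′(p, τ; v), where T(p) = {τ ∈ T : h(p, τ) = f(p)} and h′(p, τ; v) := lim_{t→0⁺} (h(p + t·v, τ) − h(p, τ))/t. -/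

import Mathlib

/-!
Along a line `t ↦ p + t • v` everything reduces to one variable. There the right derivative of
a convex function is the limit, and the infimum, of its right slopes. If `τ` is active at `p`, the
slice `h(·, τ)` touches `f` from below at `p`, so its right derivative is at most that of `f`.
Conversely, pick maximisers `τ(t)` of `h(p + t • v, ·)` and a cluster point `τ₀` of them as
`t → 0⁺`: by continuity `τ₀` is active, and passing to the limit in
`f'(p; v) ≤ slope f (0, t) ≤ slope h(·, τ(t)) (0, t) ≤ slope h(·, τ(t)) (0, s)` for `t < s`
shows that every right slope of `h(·, τ₀)` at `0` is at least `f'(p; v)`.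
-/

open Filter Topology Set

section ClusterPt

variable {ι X Y β : Type*} [TopologicalSpace X] [TopologicalSpace Y] {l : Filter ι}

theorem Filter.Tendsto.prodMk_mapClusterPt {f : ι → X} {g : ι → Y} {x : X} {y : Y}
    (hf : Tendsto f l (𝓝 x)) (hg : MapClusterPt y l g) :
    MapClusterPt (x, y) l fun i => (f i, g i) := by
  rw [((𝓝 x).basis_sets.prod_nhds (𝓝 y).basis_sets).mapClusterPt_iff_frequently]
  rintro ⟨s, t⟩ ⟨hs, ht⟩
  exact ((mapClusterPt_iff_frequently.1 hg t ht).and_eventually (hf hs)).mono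
    fun _ h => ⟨h.2, h.1⟩

theorem MapClusterPt.le_of_eventually_le [Preorder β] [TopologicalSpace β]
    [OrderClosedTopology β] {u : ι → X} {z : X} {A : Set X} {f g : X → β}
    (hz : MapClusterPt z l u) (hA : ∀ᶠ i in l, u i ∈ A)
    (hf : ContinuousWithinAt f A z) (hg : ContinuousWithinAt g A z)
    (hle : ∀ᶠ i in l, f (u i) ≤ g (u i)) : f z ≤ g z := by
  have hz' : z ∈ closure {y ∈ A | f y ≤ g y} :=
    mem_closure_iff_frequently.2 (hz.frequently' (hA.and hle))
  exact ContinuousWithinAt.closure_le hz' (hf.mono (sep_subset _ _)) (hg.mono (sep_subset _ _))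
    fun _ hy => hy.2

end ClusterPt

section RightDeriv

variable {S : Set ℝ} {x : ℝ}

theorem eventually_mem_and_lt_of_mem_interior (hx : x ∈ interior S) :
    ∀ᶠ t in 𝓝[>] x, t ∈ S ∧ x < t :=
  Eventually.and (mem_nhdsWithin_of_mem_nhds (mem_interior_iff_mem_nhds.1 hx))
    eventually_mem_nhdsWithin

theorem ConvexOn.tendsto_slope_rightDeriv {f : ℝ → ℝ} (hf : ConvexOn ℝ S f)
    (hx : x ∈ interior S) :
    Tendsto (slope f x) (𝓝[>] x) (𝓝 (derivWithin f (Ioi x) x)) :=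
  (hasDerivWithinAt_iff_tendsto_slope' self_notMem_Ioi).1
    (hf.hasDerivWithinAt_rightDeriv_of_mem_interior hx)

theorem ConvexOn.rightDeriv_le_of_le_of_eq {f g : ℝ → ℝ} (hf : ConvexOn ℝ S f)
    (hg : ConvexOn ℝ S g) (hx : x ∈ interior S) (hle : ∀ t ∈ S, f t ≤ g t) (heq : f x = g x) :
    derivWithin f (Ioi x) x ≤ derivWithin g (Ioi x) x := by
  refine le_of_tendsto_of_tendsto (hf.tendsto_slope_rightDeriv hx)
    (hg.tendsto_slope_rightDeriv hx) ?_
  filter_upwards [eventually_mem_and_lt_of_mem_interior hx] with t ⟨htS, hxt⟩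
  rw [slope_def_field, slope_def_field, heq]
  gcongr
  exact hle t htS

end RightDeriv

section SupOfConvex

variable {E ι : Type*} [AddCommGroup E] [Module ℝ E] {s : Set E} {T : Set ι} {h : E → ι → ℝ}

theorem convexOn_sSup_image (hT : T.Nonempty) (hconv : ∀ τ ∈ T, ConvexOn ℝ s (h · τ))
    (hbdd : ∀ p ∈ s, BddAbove ((h p ·) '' T)) :
    ConvexOn ℝ s fun p => sSup ((h p ·) '' T) := by
  obtain ⟨τ₀, hτ₀⟩ := hT
  refine ⟨(hconv τ₀ hτ₀).1, fun x hx y hy a b ha hb hab => ?_⟩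
  refine csSup_le ⟨_, mem_image_of_mem _ hτ₀⟩ ?_
  rintro _ ⟨τ, hτ, rfl⟩
  calc h (a • x + b • y) τ ≤ a • h x τ + b • h y τ := (hconv τ hτ).2 hx hy ha hb hab
    _ ≤ a • sSup ((h x ·) '' T) + b • sSup ((h y ·) '' T) := by
      gcongr
      · exact le_csSup (hbdd x hx) (mem_image_of_mem _ hτ)
      · exact le_csSup (hbdd y hy) (mem_image_of_mem _ hτ)

end SupOfConvex

section Line

variable {E : Type*} [AddCommGroup E] [Module ℝ E] {s : Set E} {g : E → ℝ}

theorem ConvexOn.comp_add_smul (hg : ConvexOn ℝ s g) (p v : E) :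
    ConvexOn ℝ {t : ℝ | p + t • v ∈ s} fun t => g (p + t • v) := by
  have hline : ∀ t : ℝ, AffineMap.lineMap p (p + v) t = p + t • v := fun t => by
    rw [AffineMap.lineMap_apply_module', add_sub_cancel_left, add_comm]
  simpa only [Function.comp_def, preimage, hline] using
    hg.comp_affineMap (AffineMap.lineMap p (p + v))

theorem slope_comp_add_smul_zero (g : E → ℝ) (p v : E) :
    slope (fun t : ℝ => g (p + t • v)) 0 = fun t => (g (p + t • v) - g p) / t := by
  funext t
  simp [slope_def_field]

variable [TopologicalSpace E] [ContinuousAdd E] [ContinuousSMul ℝ E]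

theorem zero_mem_interior_setOf_add_smul_mem (hs : IsOpen s) {p : E} (hp : p ∈ s) (v : E) :
    (0 : ℝ) ∈ interior {t : ℝ | p + t • v ∈ s} := by
  have hopen : IsOpen {t : ℝ | p + t • v ∈ s} := hs.preimage (by fun_prop)
  rw [hopen.interior_eq]
  simpa using hp

theorem ConvexOn.tendsto_div_rightDeriv_comp_add_smul (hg : ConvexOn ℝ s g) (hs : IsOpen s)
    {p : E} (hp : p ∈ s) (v : E) :
    Tendsto (fun t : ℝ => (g (p + t • v) - g p) / t) (𝓝[>] 0)
      (𝓝 (derivWithin (fun t : ℝ => g (p + t • v)) (Ioi 0) 0)) := by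
  simpa only [slope_comp_add_smul_zero] using
    (hg.comp_add_smul p v).tendsto_slope_rightDeriv (zero_mem_interior_setOf_add_smul_mem hs hp v)

end Line

section Danskin

variable {α : Type*} [TopologicalSpace α] {S : Set ℝ} {T : Set α} {φ : ℝ → α → ℝ} {x : ℝ}

theorem convexOn_sSup_image_of_isCompact (hT : IsCompact T) (hTne : T.Nonempty)
    (hcont : ContinuousOn φ.uncurry (S ×ˢ T)) (hconv : ∀ τ ∈ T, ConvexOn ℝ S (φ · τ)) :
    ConvexOn ℝ S fun t => sSup ((φ t ·) '' T) :=
  convexOn_sSup_image hTne hconv fun t ht => hT.bddAbove_image (hcont.uncurry_left t ht)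

theorem rightDeriv_le_rightDeriv_sSup_image (hx : x ∈ interior S) (hT : IsCompact T)
    (hcont : ContinuousOn φ.uncurry (S ×ˢ T)) (hconv : ∀ τ ∈ T, ConvexOn ℝ S (φ · τ))
    {τ : α} (hτ : τ ∈ T) (hactive : φ x τ = sSup ((φ x ·) '' T)) :
    derivWithin (φ · τ) (Ioi x) x ≤ derivWithin (fun t => sSup ((φ t ·) '' T)) (Ioi x) x :=
  (hconv τ hτ).rightDeriv_le_of_le_of_eq
    (convexOn_sSup_image_of_isCompact hT ⟨τ, hτ⟩ hcont hconv) hx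
    (fun t ht => le_csSup (hT.bddAbove_image (hcont.uncurry_left t ht)) (mem_image_of_mem _ hτ))
    hactive

theorem rightDeriv_sSup_image_le_slope_of_eq_sSup (hx : x ∈ interior S) (hT : IsCompact T)
    (hcont : ContinuousOn φ.uncurry (S ×ˢ T)) (hconv : ∀ τ ∈ T, ConvexOn ℝ S (φ · τ))
    {t s : ℝ} (ht : t ∈ S) (hs : s ∈ S) (hxt : x < t) (hts : t ≤ s)
    {σ : α} (hσ : σ ∈ T) (hmax : sSup ((φ t ·) '' T) = φ t σ) :
    derivWithin (fun t => sSup ((φ t ·) '' T)) (Ioi x) x ≤ slope (φ · σ) x s := by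
  have hxS : x ∈ S := interior_subset hx
  calc derivWithin (fun t => sSup ((φ t ·) '' T)) (Ioi x) x
      ≤ slope (fun t => sSup ((φ t ·) '' T)) x t :=
        (convexOn_sSup_image_of_isCompact hT ⟨σ, hσ⟩ hcont hconv)
          |>.rightDeriv_le_slope_of_mem_interior hx ht hxt
    _ ≤ slope (φ · σ) x t := by
        rw [slope_def_field, slope_def_field, hmax]
        gcongr
        exact le_csSup (hT.bddAbove_image (hcont.uncurry_left x hxS)) (mem_image_of_mem _ hσ)
    _ ≤ slope (φ · σ) x s :=
        (hconv σ hσ).slope_mono hxS ⟨ht, hxt.ne'⟩ ⟨hs, (hxt.trans_le hts).ne'⟩ hts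

theorem exists_eq_sSup_image_and_rightDeriv_sSup_le (hx : x ∈ interior S) (hT : IsCompact T)
    (hTne : T.Nonempty) (hcont : ContinuousOn φ.uncurry (S ×ˢ T))
    (hconv : ∀ τ ∈ T, ConvexOn ℝ S (φ · τ)) :
    ∃ τ ∈ T, φ x τ = sSup ((φ x ·) '' T) ∧
      derivWithin (fun t => sSup ((φ t ·) '' T)) (Ioi x) x ≤ derivWithin (φ · τ) (Ioi x) x := by
  set F : ℝ → ℝ := fun t => sSup ((φ t ·) '' T)
  have hxS : x ∈ S := interior_subset hx
  have : Nonempty α := ⟨hTne.some⟩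
  have hmax : ∀ t ∈ S, ∃ τ ∈ T, F t = φ t τ := fun t ht =>
    hT.exists_sSup_image_eq hTne (hcont.uncurry_left t ht)
  choose! τ hτT hτF using hmax
  have hnear := eventually_mem_and_lt_of_mem_interior hx
  obtain ⟨τ₀, hτ₀T, hτ₀⟩ :=
    hT.exists_mapClusterPt_of_frequently (hnear.mono fun t ht => hτT t ht.1).frequently
  have hactive : F x ≤ φ x τ₀ := by
    have hFx : ContinuousAt F x :=
      (convexOn_sSup_image_of_isCompact hT hTne hcont hconv).continuousOn_interior
        |>.continuousAt (isOpen_interior.mem_nhds hx)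
    exact (tendsto_nhdsWithin_of_tendsto_nhds tendsto_id).prodMk_mapClusterPt hτ₀
      |>.le_of_eventually_le (A := S ×ˢ T) (f := F ∘ Prod.fst) (g := φ.uncurry)
        (hnear.mono fun t ht => ⟨ht.1, hτT t ht.1⟩)
        (hFx.comp continuousAt_fst).continuousWithinAt (hcont _ ⟨hxS, hτ₀T⟩)
        (hnear.mono fun t ht => (hτF t ht.1).le)
  have hslope : ∀ s ∈ S, x < s → derivWithin F (Ioi x) x ≤ slope (φ · τ₀) x s := by
    intro s hs hxs
    have hcont_slope : ContinuousWithinAt (fun σ => slope (φ · σ) x s) T τ₀ := by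
      simp only [slope_def_field]
      exact (((hcont.uncurry_left s hs).sub (hcont.uncurry_left x hxS)).div_const _) τ₀ hτ₀T
    refine hτ₀.le_of_eventually_le (f := fun _ => derivWithin F (Ioi x) x)
      (hnear.mono fun t ht => hτT t ht.1) continuousWithinAt_const hcont_slope ?_
    filter_upwards [hnear, Ioo_mem_nhdsGT hxs] with t ⟨htS, hxt⟩ hts
    exact rightDeriv_sSup_image_le_slope_of_eq_sSup hx hT hcont hconv htS hs hxt hts.2.le
      (hτT t htS) (hτF t htS)
  refine ⟨τ₀, hτ₀T, le_antisymm ?_ hactive, ?_⟩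
  · exact le_csSup (hT.bddAbove_image (hcont.uncurry_left x hxS)) (mem_image_of_mem _ hτ₀T)
  · refine ge_of_tendsto ((hconv τ₀ hτ₀T).tendsto_slope_rightDeriv hx) ?_
    filter_upwards [hnear] with s ⟨hs, hxs⟩ using hslope s hs hxs

end Danskin

theorem stmt_1 {n : ℕ} (Ω : Set (EuclideanSpace ℝ (Fin n))) (hΩo : IsOpen Ω)
    (T : Set ℝ) (hT : IsCompact T) (hTne : T.Nonempty)
    (h : EuclideanSpace ℝ (Fin n) → ℝ → ℝ)
    (hcont : ContinuousOn (fun q : EuclideanSpace ℝ (Fin n) × ℝ => h q.1 q.2) (Ω ×ˢ T))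
    (hconv : ∀ τ ∈ T, ConvexOn ℝ Ω fun p => h p τ)
    (f : EuclideanSpace ℝ (Fin n) → ℝ)
    (hf : ∀ p, f p = sSup ((fun τ => h p τ) '' T)) :
    ConvexOn ℝ Ω f ∧
    ∀ p ∈ Ω, ∀ v : EuclideanSpace ℝ (Fin n),
      ∃ D : ℝ,
        Tendsto (fun t : ℝ => (f (p + t • v) - f p) / t) (𝓝[>] 0) (𝓝 D) ∧
        (∀ τ ∈ T, h p τ = f p →
          ∃ Dτ : ℝ,
            Tendsto (fun t : ℝ => (h (p + t • v) τ - h p τ) / t) (𝓝[>] 0) (𝓝 Dτ) ∧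
            Dτ ≤ D) ∧
        (∃ τ ∈ T, h p τ = f p ∧
          Tendsto (fun t : ℝ => (h (p + t • v) τ - h p τ) / t) (𝓝[>] 0) (𝓝 D)) := by
  have hbdd : ∀ p ∈ Ω, BddAbove ((h p ·) '' T) := fun p hp =>
    hT.bddAbove_image (hcont.uncurry_left p hp)
  have hfconv : ConvexOn ℝ Ω f := by
    rw [show f = _ from funext hf]
    exact convexOn_sSup_image hTne hconv hbdd
  refine ⟨hfconv, fun p hp v => ?_⟩
  set S : Set ℝ := {t | p + t • v ∈ Ω}
  have h0 : (0 : ℝ) ∈ interior S := zero_mem_interior_setOf_add_smul_mem hΩo hp v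
  have hline_cont : ContinuousOn (fun t τ => h (p + t • v) τ).uncurry (S ×ˢ T) :=
    hcont.comp (f := fun q : ℝ × ℝ => (p + q.1 • v, q.2)) (by fun_prop) fun _ hq => hq
  have hline_conv : ∀ τ ∈ T, ConvexOn ℝ S fun t => h (p + t • v) τ := fun τ hτ =>
    (hconv τ hτ).comp_add_smul p v
  have hf_line : (fun t : ℝ => f (p + t • v)) = fun t => sSup ((h (p + t • v) ·) '' T) :=
    funext fun t => hf _
  have hactive : ∀ τ,
      h p τ = f p ↔ h (p + (0 : ℝ) • v) τ = sSup ((h (p + (0 : ℝ) • v) ·) '' T) := by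
    simp [hf]
  refine ⟨_, hfconv.tendsto_div_rightDeriv_comp_add_smul hΩo hp v, fun τ hτ hτp =>
    ⟨_, (hconv τ hτ).tendsto_div_rightDeriv_comp_add_smul hΩo hp v, ?_⟩, ?_⟩
  · rw [hf_line]
    exact rightDeriv_le_rightDeriv_sSup_image h0 hT hline_cont hline_conv hτ
      ((hactive τ).1 hτp)
  · obtain ⟨τ₀, hτ₀, hτ₀p, hle⟩ :=
      exists_eq_sSup_image_and_rightDeriv_sSup_le h0 hT hTne hline_cont hline_conv
    have hD := le_antisymm
      (rightDeriv_le_rightDeriv_sSup_image h0 hT hline_cont hline_conv hτ₀ hτ₀p) hle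
    refine ⟨τ₀, hτ₀, (hactive τ₀).2 hτ₀p, ?_⟩
    rw [hf_line, ← hD]
    exact (hconv τ₀ hτ₀).tendsto_div_rightDeriv_comp_add_smul hΩo hp v
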